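/- Let f₀ be a convex integrable density on [0,∞) that is linear on [x₀ − 2δ, x₀] for some δ > 0 and x₀ > 2δ, with distribution function F₀. Let g be a nonnegative convex integrable function on [0,∞) with G(t) = ∫₀ᵗ g, and suppose c := g(x₀) − f₀(x₀) < 0. Then 2·sup_{t ≥ 0} |G(t) − F₀(t)| ≥ |c| δ / 4. -/

import Mathlib

/-!
On `[x₀ - 2δ, x₀]` the difference `h = g - f₀` is convex, since `f₀` is affine there, and
`h x₀ = c < 0`. If `h (x₀ - δ) ≤ |c| / 2`, then `h` lies below its chord on `[x₀ - δ, x₀]`, so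
`∫ h` over that interval is at most `δ (|c| / 2 - |c|) / 2 = -|c| δ / 4`. Otherwise, for `t` in
`[x₀ - 2δ, x₀ - δ]` the value `h (x₀ - δ) > |c| / 2` lies below the chord from `(t, h t)` to
`(x₀, c)`, which forces `h t ≥ |c| / 2`, and `∫ h` over `[x₀ - 2δ, x₀ - δ]` is at least `|c| δ / 2`. Either way
`G - F₀ = ∫₀ h` changes by at least `|c| δ / 4` between two points, so it is at least
`|c| δ / 8` in absolute value at one of them.
-/

open Set MeasureTheory

theorem ConvexOn.mul_le_chord {𝕜 : Type*} [Field 𝕜] [LinearOrder 𝕜] [IsStrictOrderedRing 𝕜]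
    {s : Set 𝕜} {f : 𝕜 → 𝕜} (hf : ConvexOn 𝕜 s f) {x y z : 𝕜} (hx : x ∈ s) (hz : z ∈ s)
    (hxy : x ≤ y) (hyz : y ≤ z) :
    (z - x) * f y ≤ (z - y) * f x + (y - x) * f z := by
  rcases hxy.eq_or_lt with rfl | hxy
  · simp
  rcases hyz.eq_or_lt with rfl | hyz
  · simp
  exact hf.secant_mono_aux1 hx hz hxy hyz

theorem intervalIntegral.integral_chord (a b A B : ℝ) :
    ∫ t in a..b, ((b - t) * A + (t - a) * B) = (b - a) * ((b - a) * (A + B) / 2) := by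
  have affine : (fun t : ℝ => (b - t) * A + (t - a) * B) =
      fun t => (b * A - a * B) + (B - A) * t := by
    funext t
    ring
  rw [affine, integral_add intervalIntegrable_const (intervalIntegrable_id.const_mul _),
    integral_const_mul]
  simp only [integral_const, integral_id, smul_eq_mul]
  ring

theorem ConvexOn.integral_le_trapezoid {f : ℝ → ℝ} {a b : ℝ} (hf : ConvexOn ℝ (Icc a b) f)
    (hint : IntervalIntegrable f volume a b) (hab : a ≤ b) :
    ∫ t in a..b, f t ≤ (b - a) * (f a + f b) / 2 := by
  rcases hab.eq_or_lt with rfl | hab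
  · simp
  have hchord : ∀ t ∈ Icc a b, (b - a) * f t ≤ (b - t) * f a + (t - a) * f b := fun t ht =>
    hf.mul_le_chord (left_mem_Icc.2 hab.le) (right_mem_Icc.2 hab.le) ht.1 ht.2
  have hmono := intervalIntegral.integral_mono_on hab.le (hint.const_mul (b - a))
    ((by fun_prop : Continuous fun t => (b - t) * f a + (t - a) * f b).intervalIntegrable _ _)
    hchord
  rw [intervalIntegral.integral_const_mul, intervalIntegral.integral_chord] at hmono
  exact le_of_mul_le_mul_left hmono (sub_pos.2 hab)

theorem ConvexOn.le_integral_or_integral_le_of_neg {h : ℝ → ℝ} {x δ : ℝ}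
    (hh : ConvexOn ℝ (Icc (x - 2 * δ) x) h)
    (hint : IntervalIntegrable h volume (x - 2 * δ) x) (hδ : 0 < δ) (hx : h x < 0) :
    -h x * δ / 4 ≤ ∫ t in (x - 2 * δ)..(x - δ), h t ∨
      ∫ t in (x - δ)..x, h t ≤ h x * δ / 4 := by
  have hsub : ∀ {u v}, x - 2 * δ ≤ u → u ≤ v → v ≤ x → uIcc u v ⊆ uIcc (x - 2 * δ) x :=
    fun hu huv hv =>
      uIcc_subset_uIcc (mem_uIcc_of_le hu (huv.trans hv)) (mem_uIcc_of_le (hu.trans huv) hv)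
  rcases le_or_gt (h (x - δ)) (-h x / 2) with hmid | hmid
  · right
    have hright : Icc (x - δ) x ⊆ Icc (x - 2 * δ) x := Icc_subset_Icc (by linarith) le_rfl
    have htrap := (hh.subset hright (convex_Icc _ _)).integral_le_trapezoid
      (hint.mono_set (hsub (by linarith) (by linarith) le_rfl)) (by linarith)
    calc ∫ t in (x - δ)..x, h t ≤ δ * (h (x - δ) + h x) / 2 := by
          rwa [sub_sub_cancel] at htrap
      _ ≤ h x * δ / 4 := by nlinarith
  · left
    have hlow : ∀ t ∈ Icc (x - 2 * δ) (x - δ), -h x / 2 ≤ h t := by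
      intro t ht
      have hchord := hh.mul_le_chord (y := x - δ) ⟨ht.1, by linarith [ht.2]⟩
        ⟨by linarith, le_rfl⟩ ht.2 (by linarith)
      rw [sub_sub_cancel] at hchord
      nlinarith [ht.2]
    have hmono := intervalIntegral.integral_mono_on (by linarith) intervalIntegrable_const
      (hint.mono_set (hsub le_rfl (by linarith) (by linarith))) hlow
    rw [intervalIntegral.integral_const, smul_eq_mul] at hmono
    nlinarith

namespace MeasureTheory.IntegrableOn

variable {f : ℝ → ℝ} {a : ℝ}

theorem intervalIntegrable_of_Ici (hf : IntegrableOn f (Ici a)) {u v : ℝ} (hu : a ≤ u)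
    (hv : a ≤ v) : IntervalIntegrable f volume u v :=
  (hf.mono_set fun _ ht => le_trans (le_min hu hv) ht.1).intervalIntegrable

theorem abs_intervalIntegral_le (hf : IntegrableOn f (Ici a)) {t : ℝ} (ht : a ≤ t) :
    |∫ s in a..t, f s| ≤ ∫ s in Ici a, |f s| := by
  rw [intervalIntegral.integral_of_le ht]
  have hsub : Ioc a t ≤ Ici a := Ioc_subset_Icc_self.trans Icc_subset_Ici_self
  exact abs_integral_le_integral_abs.trans <|
    setIntegral_mono_set hf.abs (ae_of_all _ fun _ => abs_nonneg _) hsub.eventuallyLE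

theorem abs_intervalIntegral_le_two_mul_iSup (hf : IntegrableOn f (Ici a)) {u v : ℝ}
    (hu : a ≤ u) (hv : a ≤ v) :
    |∫ s in u..v, f s| ≤ 2 * ⨆ t : Ici a, |∫ s in a..t, f s| := by
  have hbdd : BddAbove (range fun t : Ici a => |∫ s in a..t, f s|) :=
    ⟨_, forall_mem_range.2 fun t => hf.abs_intervalIntegral_le t.2⟩
  rw [← intervalIntegral.integral_interval_sub_left (hf.intervalIntegrable_of_Ici le_rfl hv)
    (hf.intervalIntegrable_of_Ici le_rfl hu)]
  linarith [abs_sub (∫ s in a..v, f s) (∫ s in a..u, f s), le_ciSup hbdd ⟨u, hu⟩,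
    le_ciSup hbdd ⟨v, hv⟩]

end MeasureTheory.IntegrableOn

theorem stmt_18_general (δ x₀ : ℝ) (hδ : 0 < δ) (hx₀ : 2 * δ < x₀)
    (f₀ : ℝ → ℝ)
    (hf₀_int : IntegrableOn f₀ (Ici (0 : ℝ)))
    (hf₀_lin : ∃ p q : ℝ, ∀ t ∈ Icc (x₀ - 2 * δ) x₀, f₀ t = p * t + q)
    (g : ℝ → ℝ)
    (hg_conv : ConvexOn ℝ (Ici (0 : ℝ)) g)
    (hg_int : IntegrableOn g (Ici (0 : ℝ)))
    (G F₀ : ℝ → ℝ)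
    (hG : ∀ t, G t = ∫ s in (0 : ℝ)..t, g s)
    (hF₀ : ∀ t, F₀ t = ∫ s in (0 : ℝ)..t, f₀ s)
    (c : ℝ) (hcdef : c = g x₀ - f₀ x₀) (hc : c < 0) :
    |c| * δ / 4 ≤ 2 * ⨆ t : Ici (0 : ℝ), |G t - F₀ t| := by
  obtain ⟨p, q, hpq⟩ := hf₀_lin
  have hint : IntegrableOn (fun s => g s - f₀ s) (Ici 0) := hg_int.sub hf₀_int
  have hprim : (fun t : Ici (0 : ℝ) => |G t - F₀ t|) =
      fun t : Ici (0 : ℝ) => |∫ s in (0 : ℝ)..t, (g s - f₀ s)| := by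
    funext t
    rw [hG, hF₀, intervalIntegral.integral_sub (hg_int.intervalIntegrable_of_Ici le_rfl t.2)
      (hf₀_int.intervalIntegrable_of_Ici le_rfl t.2)]
  have hconv : ConvexOn ℝ (Icc (x₀ - 2 * δ) x₀) fun s => g s - f₀ s := by
    have hg : ConvexOn ℝ (Icc (x₀ - 2 * δ) x₀) g := hg_conv.subset
      (Icc_subset_Ici_self.trans (Ici_subset_Ici.2 (by linarith))) (convex_Icc _ _)
    have haff : ConcaveOn ℝ (Icc (x₀ - 2 * δ) x₀) fun t => p * t + q :=
      ((LinearMap.mulLeft ℝ p).concaveOn (convex_Icc _ _)).add_const q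
    exact (hg.sub haff).congr fun t ht => by simp [hpq t ht]
  rw [hprim, abs_of_neg hc, hcdef]
  rcases hconv.le_integral_or_integral_le_of_neg
    (hint.intervalIntegrable_of_Ici (by linarith) (by linarith)) hδ (hcdef ▸ hc) with h | h
  · exact h.trans <| (le_abs_self _).trans <|
      hint.abs_intervalIntegral_le_two_mul_iSup (by linarith) (by linarith)
  · refine le_trans ?_ <| (neg_le_abs _).trans <|
      hint.abs_intervalIntegral_le_two_mul_iSup (u := x₀ - δ) (v := x₀)
        (by linarith) (by linarith)
    linarith

theorem stmt_18 (δ x₀ : ℝ) (hδ : 0 < δ) (hx₀ : 2 * δ < x₀)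
    (f₀ : ℝ → ℝ) (hf₀_nonneg : ∀ t ∈ Ici (0 : ℝ), 0 ≤ f₀ t)
    (hf₀_conv : ConvexOn ℝ (Ici (0 : ℝ)) f₀)
    (hf₀_int : IntegrableOn f₀ (Ici (0 : ℝ)))
    (hf₀_one : ∫ t in Ici (0 : ℝ), f₀ t = 1)
    (hf₀_lin : ∃ p q : ℝ, ∀ t ∈ Icc (x₀ - 2 * δ) x₀, f₀ t = p * t + q)
    (g : ℝ → ℝ) (hg_nonneg : ∀ t ∈ Ici (0 : ℝ), 0 ≤ g t)
    (hg_conv : ConvexOn ℝ (Ici (0 : ℝ)) g)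
    (hg_int : IntegrableOn g (Ici (0 : ℝ)))
    (G F₀ : ℝ → ℝ)
    (hG : ∀ t, G t = ∫ s in (0 : ℝ)..t, g s)
    (hF₀ : ∀ t, F₀ t = ∫ s in (0 : ℝ)..t, f₀ s)
    (c : ℝ) (hcdef : c = g x₀ - f₀ x₀) (hc : c < 0) :
    |c| * δ / 4 ≤ 2 * ⨆ t : Ici (0 : ℝ), |G t - F₀ t| :=
  stmt_18_general δ x₀ hδ hx₀ f₀ hf₀_int hf₀_lin g hg_conv hg_int G F₀ hG hF₀ c hcdef hc
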